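/- Let K be an algebraically closed field of characteristic zero and let n ≥ 1 be an integer. Then there exist a natural number m and polynomials f₀, f₁, …, f_n in m variables over K such that: (1) for every v ∈ K^m, not all of f₀(v), …, f_n(v) are zero; and (2) the induced map K^m → ℙⁿ(K) sending v to the point with homogeneous coordinates [f₀(v) : ⋯ : f_n(v)] is surjective. In other words, projective n-space over K is the image of a morphism from an affine space. -/

import Mathlib

/-!
Over any field, take the polynomial map `(x, y) ↦ [x₀ : ⋯ : xₙ₋₁ : 1 - x ⬝ᵥ y]` from
`Kⁿ × Kⁿ` to `ℙⁿ`. Its last coordinate is `1` when `x = 0`, so it never vanishes. A point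
`[w]` whose first `n` coordinates `x` are not all zero is hit by choosing `y` with
`x ⬝ᵥ y = 1 - wₙ`, which is possible because a nonzero linear form is onto; every other
point is `[0 : ⋯ : 0 : 1]`.
-/

open MvPolynomial Matrix

section

variable {K : Type*} [Field K] {n : ℕ}

theorem exists_dotProduct_eq {ι : Type*} [Fintype ι] [DecidableEq ι] {x : ι → K}
    (hx : x ≠ 0) (t : K) : ∃ y, x ⬝ᵥ y = t := by
  obtain ⟨j, hj⟩ := Function.ne_iff.mp hx
  exact ⟨Pi.single j (t / x j), by rw [dotProduct_single, mul_div_cancel₀ _ hj]⟩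

def projCoverMap (x y : Fin n → K) : Fin (n + 1) → K :=
  Fin.snoc x (1 - x ⬝ᵥ y)

theorem projCoverMap_ne_zero (x y : Fin n → K) : projCoverMap x y ≠ 0 := by
  intro h
  have hx : x = 0 := funext fun j => by simpa [projCoverMap] using congrFun h j.castSucc
  have hlast := congrFun h (Fin.last n)
  simp [projCoverMap, hx] at hlast

theorem projCoverMap_surjective :
    Function.Surjective fun p : (Fin n → K) × (Fin n → K) =>
      Projectivization.mk K (projCoverMap p.1 p.2) (projCoverMap_ne_zero p.1 p.2) := by
  intro q
  induction q using Projectivization.ind with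
  | h w hw =>
    by_cases hinit : Fin.init w = 0
    · refine ⟨(0, 0), (Projectivization.mk_eq_mk_iff' K _ _ _ hw).mpr ⟨(w (Fin.last n))⁻¹, ?_⟩⟩
      have hinit' (j : Fin n) : w j.castSucc = 0 := congrFun hinit j
      have hlast : w (Fin.last n) ≠ 0 := fun h0 =>
        hw (funext fun i => Fin.lastCases h0 hinit' i)
      funext i
      induction i using Fin.lastCases with
      | last => simp [projCoverMap, hlast]
      | cast j => simp [projCoverMap, hinit' j]
    · obtain ⟨y, hy⟩ := exists_dotProduct_eq hinit (1 - w (Fin.last n))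
      refine ⟨(Fin.init w, y), ?_⟩
      simp only [projCoverMap, hy, sub_sub_cancel, Fin.snoc_init_self]

noncomputable def projCoverPoly (n : ℕ) (K : Type*) [Field K] :
    Fin (n + 1) → MvPolynomial (Fin (n + n)) K :=
  Fin.snoc (fun j => X (Fin.castAdd n j))
    (1 - ∑ j, X (Fin.castAdd n j) * X (Fin.natAdd n j))

theorem eval_projCoverPoly (v : Fin (n + n) → K) :
    (fun i => eval v (projCoverPoly n K i)) =
      projCoverMap (fun j => v (Fin.castAdd n j)) (fun j => v (Fin.natAdd n j)) := by
  funext i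
  induction i using Fin.lastCases with
  | last => simp [projCoverPoly, projCoverMap, dotProduct]
  | cast j => simp [projCoverPoly, projCoverMap]

end

theorem stmt_10_general (K : Type*) [Field K] (n : ℕ) :
    ∃ (m : ℕ) (f : Fin (n + 1) → MvPolynomial (Fin m) K)
      (h : ∀ v : Fin m → K, (fun i : Fin (n + 1) => MvPolynomial.eval v (f i)) ≠ 0),
      Function.Surjective
        (fun v : Fin m → K =>
          Projectivization.mk K (fun i : Fin (n + 1) => MvPolynomial.eval v (f i)) (h v)) := by
  refine ⟨n + n, projCoverPoly n K,
    fun v => eval_projCoverPoly v ▸ projCoverMap_ne_zero _ _, fun q => ?_⟩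
  obtain ⟨⟨x, y⟩, rfl⟩ := projCoverMap_surjective q
  refine ⟨Fin.append x y, ?_⟩
  simp only [eval_projCoverPoly, Fin.append_left, Fin.append_right]

/-- Projective `n`-space over `K` is the image of a morphism from an affine space: there
are polynomials `f₀,…,fₙ` in `m` variables, never simultaneously vanishing, inducing a
surjection `K^m → ℙⁿ(K)`. -/
theorem stmt_10 (K : Type*) [Field K] [IsAlgClosed K] [CharZero K] (n : ℕ) (hn : 1 ≤ n) :
    ∃ (m : ℕ) (f : Fin (n + 1) → MvPolynomial (Fin m) K)
      (h : ∀ v : Fin m → K, (fun i : Fin (n + 1) => MvPolynomial.eval v (f i)) ≠ 0),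
      Function.Surjective
        (fun v : Fin m → K =>
          Projectivization.mk K (fun i : Fin (n + 1) => MvPolynomial.eval v (f i)) (h v)) :=
  stmt_10_general K n
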